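/- Let v, b₁, …, bₙ ∈ ℝ^{n+1} and v, b'₁, …, b'ₙ ∈ ℝ^{n+1} be two linearly independent families generating the same lattice L (i.e. {z₀·v + Σᵢ zᵢ·bᵢ : z ∈ ℤ^{n+1}} = {z₀·v + Σᵢ zᵢ·b'ᵢ : z ∈ ℤ^{n+1}}). If dist(v, ⟨{b'₁,…,b'ₙ}⟩) ≥ dist(v, ⟨{b₁,…,bₙ}⟩), then vol(B') ≤ vol(B), where B and B' are the (n+1)×n matrices with columns b₁,…,bₙ and b'₁,…,b'ₙ respectively. -/

import Mathlib

/-- The orthogonal projection of `v` onto the span of `S`. -/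
noncomputable def projSpan {m : ℕ} (S : Set (EuclideanSpace ℝ (Fin m)))
    (v : EuclideanSpace ℝ (Fin m)) : EuclideanSpace ℝ (Fin m) :=
  (Submodule.orthogonalProjection (Submodule.span ℝ S) v : EuclideanSpace ℝ (Fin m))

/-- `dist(v, ⟨S⟩) = ‖v − proj_{⟨S⟩}(v)‖`. -/
noncomputable def distSpan {m : ℕ} (v : EuclideanSpace ℝ (Fin m))
    (S : Set (EuclideanSpace ℝ (Fin m))) : ℝ :=
  ‖v - projSpan S v‖

/-- `vol` of the `(n+1) × n` matrix with columns `b₁, …, bₙ`: `√(det(Bᵀ·B))`. -/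
noncomputable def volCols {n : ℕ} (b : Fin n → EuclideanSpace ℝ (Fin (n+1))) : ℝ :=
  Real.sqrt (((Matrix.of fun (r : Fin (n+1)) (c : Fin n) => b c r).transpose *
    Matrix.of fun (r : Fin (n+1)) (c : Fin n) => b c r).det)

open Matrix

noncomputable section VolAux

/-- The matrix whose columns are the vectors `f`. -/
def colMat {m k : ℕ} (f : Fin k → EuclideanSpace ℝ (Fin m)) : Matrix (Fin m) (Fin k) ℝ :=
  Matrix.of fun r c => f c r

lemma sum_pi_apply {m k : ℕ} (g : Fin k → EuclideanSpace ℝ (Fin m)) (r : Fin m) :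
    (∑ i, g i) r = ∑ i, g i r :=
  by rw [WithLp.ofLp_sum, Finset.sum_apply]

lemma gram_apply {m k : ℕ} (f : Fin k → EuclideanSpace ℝ (Fin m)) (i j : Fin k) :
    ((colMat f)ᵀ * colMat f) i j = (inner ℝ (f i) (f j) : ℝ) := by
  simp [colMat, Matrix.mul_apply, PiLp.inner_apply, RCLike.inner_apply, mul_comm]

lemma det_ne_zero' {k : ℕ} {f : Fin k → EuclideanSpace ℝ (Fin k)} (h : LinearIndependent ℝ f) :
    (colMat f).det ≠ 0 := by
  have h2 : LinearIndependent ℝ (fun i => (colMat f)ᵀ i) :=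
    h.map' (WithLp.linearEquiv 2 ℝ (Fin k → ℝ)).toLinearMap (LinearEquiv.ker _)
  exact (Matrix.isUnit_iff_isUnit_det _ |>.mp
    (Matrix.linearIndependent_cols_iff_isUnit.mp h2)).ne_zero

/-- Gram-determinant base-times-height formula (squared). -/
lemma det_cons_sq {k : ℕ} (v w : EuclideanSpace ℝ (Fin (k+1)))
    (b : Fin k → EuclideanSpace ℝ (Fin (k+1))) (c : Fin k → ℝ)
    (hv : v = w + ∑ i, c i • b i)
    (horth : ∀ i, (inner ℝ (b i) w : ℝ) = 0) :
    (colMat (Fin.cons v b)).det ^ 2 = ‖w‖ ^ 2 * ((colMat b)ᵀ * colMat b).det := by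
  classical
  set E : Matrix (Fin (k+1)) (Fin (k+1)) ℝ :=
    Matrix.of fun r j => if j = 0 then (Fin.cons 1 c : Fin (k+1) → ℝ) r
      else if r = j then 1 else 0 with hE
  have hAE : colMat (Fin.cons v b) = colMat (Fin.cons w b) * E := by
    ext r j
    refine Fin.cases ?_ (fun j => ?_) j
    · simp only [colMat, hE, Matrix.mul_apply, Matrix.of_apply, if_pos rfl,
        Fin.cons_zero, hv]
      rw [Fin.sum_univ_succ, show (w + ∑ x : Fin k, c x • b x) r
          = w r + ∑ x : Fin k, c x * b x r from by
            rw [PiLp.add_apply, sum_pi_apply]; simp [PiLp.smul_apply]]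
      simp [mul_comm]
    · simp only [colMat, hE, Matrix.mul_apply, Matrix.of_apply, Fin.cons_succ]
      rw [Finset.sum_eq_single j.succ]
      · simp [Fin.succ_ne_zero]
      · intro x _ hx
        simp [Fin.succ_ne_zero j, hx]
      · simp
  have hdetE : E.det = 1 := by
    rw [Matrix.det_of_lowerTriangular E]
    · rw [Finset.prod_eq_one]
      intro i _
      refine Fin.cases ?_ (fun i => ?_) i <;> simp [hE, Fin.succ_ne_zero]
    · intro i j hij
      have h0 : j ≠ 0 := by
        rintro rfl
        exact absurd (OrderDual.toDual_lt_toDual.mp hij) (by simp)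
      have hne : i ≠ j := fun h => by subst h; exact lt_irrefl _ hij
      simp [hE, h0, hne]
  have hdet : (colMat (Fin.cons v b)).det = (colMat (Fin.cons w b)).det := by
    rw [hAE, Matrix.det_mul, hdetE, mul_one]
  set G := (colMat (Fin.cons w b))ᵀ * colMat (Fin.cons w b) with hG
  have hGdet : (colMat (Fin.cons w b)).det ^ 2 = G.det := by
    rw [hG, Matrix.det_mul, Matrix.det_transpose, sq]
  rw [hdet, hGdet, Matrix.det_succ_column_zero]
  rw [Fin.sum_univ_succ]
  have hz : ∀ i : Fin k, G i.succ 0 = 0 := by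
    intro i
    rw [hG, gram_apply]
    simpa using horth i
  rw [Finset.sum_eq_zero (fun i _ => by rw [hz i]; ring)]
  have h00 : G 0 0 = ‖w‖ ^ 2 := by
    rw [hG, gram_apply]
    simp only [Fin.cons_zero]
    exact real_inner_self_eq_norm_sq w
  have hsub : G.submatrix (Fin.succAbove 0) Fin.succ = (colMat b)ᵀ * colMat b := by
    ext i j
    rw [Matrix.submatrix_apply, Fin.succAbove_zero, hG, gram_apply, gram_apply]
    simp
  rw [hsub, h00]
  simp

/-- Columns expressed as integer combinations yields a matrix factorisation. -/
lemma colMat_mul {k : ℕ} (f f' : Fin k → EuclideanSpace ℝ (Fin k))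
    (M : Fin k → Fin k → ℤ) (h : ∀ j, f' j = ∑ c, (M j c : ℝ) • f c) :
    colMat f' = colMat f * ((Matrix.of fun c j => M j c).map (Int.cast : ℤ → ℝ)) := by
  ext r j
  rw [Matrix.mul_apply]
  show f' j r = _
  rw [h j, sum_pi_apply]
  simp [colMat, mul_comm, PiLp.smul_apply]

/-- Two bases of the same lattice have the same squared determinant. -/
lemma det_sq_eq {k : ℕ} (f f' : Fin k → EuclideanSpace ℝ (Fin k))
    (hli : LinearIndependent ℝ f)
    (hM : ∀ j, ∃ M : Fin k → ℤ, f' j = ∑ c, (M c : ℝ) • f c)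
    (hN : ∀ j, ∃ N : Fin k → ℤ, f j = ∑ c, (N c : ℝ) • f' c) :
    (colMat f').det ^ 2 = (colMat f).det ^ 2 := by
  choose M hMe using hM
  choose N hNe using hN
  set Mm : Matrix (Fin k) (Fin k) ℤ := Matrix.of fun c j => M j c with hMm
  set Nm : Matrix (Fin k) (Fin k) ℤ := Matrix.of fun c j => N j c with hNm
  have h1 : colMat f' = colMat f * Mm.map (Int.cast : ℤ → ℝ) := colMat_mul f f' M hMe
  have h2 : colMat f = colMat f' * Nm.map (Int.cast : ℤ → ℝ) := colMat_mul f' f N hNe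
  have h3 : colMat f = colMat f * (Mm.map (Int.cast : ℤ → ℝ) * Nm.map (Int.cast : ℤ → ℝ)) := by
    rw [← Matrix.mul_assoc, ← h1, ← h2]
  have hd := det_ne_zero' hli
  have h4 : (Mm.map (Int.cast : ℤ → ℝ)).det * (Nm.map (Int.cast : ℤ → ℝ)).det = 1 := by
    have := congrArg Matrix.det h3
    rw [Matrix.det_mul, Matrix.det_mul] at this
    field_simp at this
    linarith [this]
  have hmapM : (Mm.map (Int.cast : ℤ → ℝ)).det = (Mm.det : ℝ) := by
    rw [show Mm.map (Int.cast : ℤ → ℝ) = (Int.castRingHom ℝ).mapMatrix Mm from rfl,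
      ← RingHom.map_det]; rfl
  have hmapN : (Nm.map (Int.cast : ℤ → ℝ)).det = (Nm.det : ℝ) := by
    rw [show Nm.map (Int.cast : ℤ → ℝ) = (Int.castRingHom ℝ).mapMatrix Nm from rfl,
      ← RingHom.map_det]; rfl
  have h5 : (Mm.det : ℝ) * (Nm.det : ℝ) = 1 := by
    rwa [hmapM, hmapN] at h4
  have h6 : Mm.det * Nm.det = 1 := by exact_mod_cast h5
  have h7 : Mm.det = 1 ∨ Mm.det = -1 := Int.isUnit_iff.mp (IsUnit.of_mul_eq_one _ h6)
  have h8 : ((Mm.map (Int.cast : ℤ → ℝ)).det) ^ 2 = 1 := by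
    rw [hmapM]
    rcases h7 with h | h <;> simp [h]
  rw [h1, Matrix.det_mul, mul_pow, h8, mul_one]

/-- The base-times-height formula in terms of `distSpan` and `volCols`. -/
lemma det_sq_dist {n : ℕ} (v : EuclideanSpace ℝ (Fin (n+1)))
    (b : Fin n → EuclideanSpace ℝ (Fin (n+1))) :
    (colMat (Fin.cons v b)).det ^ 2 =
      (distSpan v (Set.range b)) ^ 2 * ((colMat b)ᵀ * colMat b).det := by
  set w := v - projSpan (Set.range b) v with hw
  have hp : projSpan (Set.range b) v ∈ Submodule.span ℝ (Set.range b) :=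
    (Submodule.orthogonalProjection (Submodule.span ℝ (Set.range b)) v).2
  obtain ⟨c, hc⟩ := Submodule.mem_span_range_iff_exists_fun ℝ |>.mp hp
  have hv : v = w + ∑ i, c i • b i := by
    rw [hw, hc]
    abel
  have hwo : w ∈ (Submodule.span ℝ (Set.range b))ᗮ :=
    Submodule.sub_starProjection_mem_orthogonal (K := Submodule.span ℝ (Set.range b)) v
  have horth : ∀ i, (inner ℝ (b i) w : ℝ) = 0 := fun i =>
    hwo (b i) (Submodule.subset_span (Set.mem_range_self i))
  rw [det_cons_sq v w b c hv horth]
  rfl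

end VolAux

/-- If `v, b₁, …, bₙ` and `v, b'₁, …, b'ₙ` generate the same lattice and
`dist(v, ⟨{b'ᵢ}⟩) ≥ dist(v, ⟨{bᵢ}⟩)`, then `vol(B') ≤ vol(B)`. -/
theorem vol_le_of_dist_ge (n : ℕ) (v : EuclideanSpace ℝ (Fin (n+1)))
    (b b' : Fin n → EuclideanSpace ℝ (Fin (n+1)))
    (hli : LinearIndependent ℝ (Fin.cons v b : Fin (n+1) → EuclideanSpace ℝ (Fin (n+1))))
    (hli' : LinearIndependent ℝ (Fin.cons v b' : Fin (n+1) → EuclideanSpace ℝ (Fin (n+1))))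
    (hlat : {x : EuclideanSpace ℝ (Fin (n+1)) |
        ∃ z₀ : ℤ, ∃ z : Fin n → ℤ, x = (z₀ : ℝ) • v + ∑ i, (z i : ℝ) • b i} =
      {x : EuclideanSpace ℝ (Fin (n+1)) |
        ∃ z₀ : ℤ, ∃ z : Fin n → ℤ, x = (z₀ : ℝ) • v + ∑ i, (z i : ℝ) • b' i})
    (hdist : distSpan v (Set.range b) ≤ distSpan v (Set.range b')) :
    volCols b' ≤ volCols b := by
  classical
  set f : Fin (n+1) → EuclideanSpace ℝ (Fin (n+1)) := Fin.cons v b with hf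
  set f' : Fin (n+1) → EuclideanSpace ℝ (Fin (n+1)) := Fin.cons v b' with hf'
  -- each vector of `f'` is an integer combination of `f`, and vice versa
  have hM : ∀ j, ∃ M : Fin (n+1) → ℤ, f' j = ∑ c, (M c : ℝ) • f c := by
    intro j
    refine Fin.cases ?_ (fun i => ?_) j
    · refine ⟨Fin.cons 1 0, ?_⟩
      rw [Fin.sum_univ_succ]
      simp [hf, hf']
    · have hmem : b' i ∈ {x : EuclideanSpace ℝ (Fin (n+1)) |
          ∃ z₀ : ℤ, ∃ z : Fin n → ℤ, x = (z₀ : ℝ) • v + ∑ k, (z k : ℝ) • b' k} := by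
        refine ⟨0, Pi.single i 1, ?_⟩
        simp [Pi.single_apply, ite_smul]
      rw [← hlat] at hmem
      obtain ⟨z₀, z, hz⟩ := hmem
      refine ⟨Fin.cons z₀ z, ?_⟩
      rw [Fin.sum_univ_succ]
      simp only [hf, hf', Fin.cons_succ, Fin.cons_zero]
      exact hz
  have hN : ∀ j, ∃ N : Fin (n+1) → ℤ, f j = ∑ c, (N c : ℝ) • f' c := by
    intro j
    refine Fin.cases ?_ (fun i => ?_) j
    · refine ⟨Fin.cons 1 0, ?_⟩
      rw [Fin.sum_univ_succ]
      simp [hf, hf']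
    · have hmem : b i ∈ {x : EuclideanSpace ℝ (Fin (n+1)) |
          ∃ z₀ : ℤ, ∃ z : Fin n → ℤ, x = (z₀ : ℝ) • v + ∑ k, (z k : ℝ) • b k} := by
        refine ⟨0, Pi.single i 1, ?_⟩
        simp [Pi.single_apply, ite_smul]
      rw [hlat] at hmem
      obtain ⟨z₀, z, hz⟩ := hmem
      refine ⟨Fin.cons z₀ z, ?_⟩
      rw [Fin.sum_univ_succ]
      simp only [hf, hf', Fin.cons_succ, Fin.cons_zero]
      exact hz
  have hdet2 : (colMat f').det ^ 2 = (colMat f).det ^ 2 := det_sq_eq f f' hli hM hN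
  have h1 := det_sq_dist v b
  have h2 := det_sq_dist v b'
  -- positivity of the distance
  have hvnotin : v ∉ Submodule.span ℝ (Set.range b) := (linearIndependent_fin_cons.mp hli).2
  have hdpos : 0 < distSpan v (Set.range b) := by
    rw [distSpan]
    rw [norm_pos_iff]
    intro h0
    apply hvnotin
    have : v = projSpan (Set.range b) v := by
      have := sub_eq_zero.mp h0
      exact this
    rw [this]
    exact (Submodule.orthogonalProjection (Submodule.span ℝ (Set.range b)) v).2
  set d := distSpan v (Set.range b)
  set d' := distSpan v (Set.range b')
  set g := ((colMat b)ᵀ * colMat b).det with hg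
  set g' := ((colMat b')ᵀ * colMat b').det with hg'
  rw [← hf] at h1
  rw [← hf'] at h2
  have hd'pos : 0 < d' := lt_of_lt_of_le hdpos hdist
  have hgnn : 0 ≤ g := by nlinarith [sq_nonneg (colMat f).det, mul_pos hdpos hdpos, h1]
  have hd2 : d ^ 2 ≤ d' ^ 2 := by nlinarith
  have key : d' ^ 2 * g' = d ^ 2 * g := by rw [← h1, ← h2, hdet2]
  have hle : g' ≤ g := by
    have h' : d' ^ 2 * g' ≤ d' ^ 2 * g := by
      rw [key]; exact mul_le_mul_of_nonneg_right hd2 hgnn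
    exact le_of_mul_le_mul_left h' (by positivity)
  have hvol : volCols b = Real.sqrt g := rfl
  have hvol' : volCols b' = Real.sqrt g' := rfl
  rw [hvol, hvol']
  exact Real.sqrt_le_sqrt hle
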